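/- In the truth-biased model with random candidate or random voter tie-breaking, a truthful ballot vector a with W(a) = {c_j} is a PNE if and only if for every voter i and every candidate c_k ∈ H(a) with c_k ≠ a_i, voter i prefers c_j to c_k. -/

import Mathlib

open Finset

/-- A ballot vector: each voter either abstains (`none`) or votes for a candidate. -/
abbrev Ballot (n m : ℕ) := Fin n → Option (Fin m)

/-- The plurality score of candidate `c` under ballot vector `b`. -/
def sc {n m : ℕ} (b : Ballot n m) (c : Fin m) : ℕ :=
  (univ.filter fun i => b i = some c).card

/-- The maximum plurality score. -/
def maxScore {n m : ℕ} (b : Ballot n m) : ℕ :=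
  univ.sup fun c : Fin m => sc b c

/-- The winning set `W(b)`: candidates with maximum score. -/
def winSet {n m : ℕ} (b : Ballot n m) : Finset (Fin m) :=
  univ.filter fun c => sc b c = maxScore b

/-- `H(b)`: candidates whose score is the maximum minus one. -/
def Hset {n m : ℕ} (b : Ballot n m) : Finset (Fin m) :=
  univ.filter fun c => sc b c + 1 = maxScore b

/-- `H'(b)`: candidates whose score is the maximum minus two. -/
def H'set {n m : ℕ} (b : Ballot n m) : Finset (Fin m) :=
  univ.filter fun c => sc b c + 2 = maxScore b

/-- `c` is the winner under lexicographic tie-breaking: the minimum-index member of `W(b)`. -/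
def IsLexWin {n m : ℕ} (b : Ballot n m) (c : Fin m) : Prop :=
  c ∈ winSet b ∧ ∀ c' ∈ winSet b, (c : ℕ) ≤ (c' : ℕ)

/-- The (degenerate) lottery induced by lexicographic tie-breaking. -/
def pLex {n m : ℕ} (b : Ballot n m) : Fin m → ℚ := fun c =>
  if c ∈ winSet b ∧ ∀ c' ∈ winSet b, (c : ℕ) ≤ (c' : ℕ) then 1 else 0

/-- The lottery induced by random-candidate tie-breaking: uniform over `W(b)`. -/
def pRC {n m : ℕ} (b : Ballot n m) : Fin m → ℚ := fun c =>
  if c ∈ winSet b then ((winSet b).card : ℚ)⁻¹ else 0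

/-- The lottery induced by random-voter tie-breaking: a uniformly random voter's
favourite member of `W(b)` is elected. -/
def pRV {n m : ℕ} (u : Fin n → Fin m → ℕ) (b : Ballot n m) : Fin m → ℚ := fun c =>
  ((univ.filter fun i : Fin n =>
      c ∈ winSet b ∧ ∀ c' ∈ winSet b, u i c' ≤ u i c).card : ℚ) / (n : ℚ)

/-- Expected utility of a lottery `p` for a voter with utility function `ui`. -/
def EU {m : ℕ} (ui : Fin m → ℕ) (p : Fin m → ℚ) : ℚ := ∑ c, p c * (ui c : ℚ)

/-- Payoff of lazy voter `i`: expected utility plus a bonus `ε` for abstaining. -/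
def lazyU {n m : ℕ} (p : Ballot n m → Fin m → ℚ) (u : Fin n → Fin m → ℕ)
    (ε : ℚ) (i : Fin n) (b : Ballot n m) : ℚ :=
  EU (u i) (p b) + if b i = none then ε else 0

/-- Pure Nash equilibrium of the lazy-voter game. -/
def lazyPNE {n m : ℕ} (p : Ballot n m → Fin m → ℚ) (u : Fin n → Fin m → ℕ)
    (ε : ℚ) (b : Ballot n m) : Prop :=
  ∀ (i : Fin n) (b' : Option (Fin m)),
    lazyU p u ε i (Function.update b i b') ≤ lazyU p u ε i b

/-- View a non-abstaining (truth-biased) ballot vector as a general ballot vector. -/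
def tv {n m : ℕ} (b : Fin n → Fin m) : Ballot n m := fun i => some (b i)

/-- Payoff of truth-biased voter `i`: expected utility plus a bonus `ε` for voting
truthfully (abstention, which would yield `-∞`, is never used). -/
def tbU {n m : ℕ} (p : Ballot n m → Fin m → ℚ) (u : Fin n → Fin m → ℕ)
    (a : Fin n → Fin m) (ε : ℚ) (i : Fin n) (b : Fin n → Fin m) : ℚ :=
  EU (u i) (p (tv b)) + if b i = a i then ε else 0

/-- Pure Nash equilibrium of the truth-biased game. -/
def tbPNE {n m : ℕ} (p : Ballot n m → Fin m → ℚ) (u : Fin n → Fin m → ℕ)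
    (a : Fin n → Fin m) (ε : ℚ) (b : Fin n → Fin m) : Prop :=
  ∀ (i : Fin n) (b' : Fin m),
    tbU p u a ε i (Function.update b i b') ≤ tbU p u a ε i b


section Aux

variable {n m : ℕ}

lemma sc_tv_eq (b : Fin n → Fin m) (c : Fin m) :
    sc (tv b) c = (univ.filter fun j => b j = c).card := by
  simp [sc, tv]

lemma sc_split (b : Fin n → Fin m) (i : Fin n) (c : Fin m) :
    sc (tv b) c = ((univ.erase i).filter fun j => b j = c).card
      + (if b i = c then 1 else 0) := by
  rw [sc_tv_eq]
  have h1 : (univ : Finset (Fin n)) = insert i (univ.erase i) :=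
    (insert_erase (mem_univ i)).symm
  have h2 : univ.filter (fun j => b j = c)
      = if b i = c then insert i ((univ.erase i).filter fun j => b j = c)
        else ((univ.erase i).filter fun j => b j = c) := by
    conv_lhs => rw [h1]
    rw [filter_insert]
  rw [h2]
  by_cases h : b i = c
  · rw [if_pos h, if_pos h, card_insert_of_notMem (by simp)]
  · rw [if_neg h, if_neg h, add_zero]

lemma sc_update (a : Fin n → Fin m) (i : Fin n) (b' : Fin m) (c : Fin m) :
    sc (tv (Function.update a i b')) c + (if a i = c then 1 else 0)
      = sc (tv a) c + (if b' = c then 1 else 0) := by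
  have hA : (univ.erase i).filter (fun j => Function.update a i b' j = c)
      = (univ.erase i).filter (fun j => a j = c) :=
    filter_congr (fun j hj => by rw [Function.update_of_ne (mem_erase.mp hj).1])
  rw [sc_split (Function.update a i b') i c, sc_split a i c, Function.update_self, hA]
  ring

lemma sc_upd_other (a : Fin n → Fin m) (i : Fin n) (b' c : Fin m)
    (h1 : a i ≠ c) (h2 : b' ≠ c) :
    sc (tv (Function.update a i b')) c = sc (tv a) c := by
  have h := sc_update a i b' c
  rw [if_neg h1, if_neg h2] at h
  omega

lemma sc_upd_tgt (a : Fin n → Fin m) (i : Fin n) (b' : Fin m) (h : a i ≠ b') :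
    sc (tv (Function.update a i b')) b' = sc (tv a) b' + 1 := by
  have h' := sc_update a i b' b'
  rw [if_neg h, if_pos rfl] at h'
  omega

lemma sc_upd_src (a : Fin n → Fin m) (i : Fin n) (b' : Fin m) (h : b' ≠ a i) :
    sc (tv (Function.update a i b')) (a i) + 1 = sc (tv a) (a i) := by
  have h' := sc_update a i b' (a i)
  rw [if_pos rfl, if_neg h] at h'
  omega

lemma winSet_eq (b : Ballot n m) (S : Finset (Fin m)) (v : ℕ)
    (hS : ∀ c, c ∈ S ↔ sc b c = v) (hle : ∀ c, sc b c ≤ v) (hne : S.Nonempty) :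
    winSet b = S := by
  obtain ⟨c0, hc0⟩ := hne
  have hv : maxScore b = v := le_antisymm (Finset.sup_le fun c _ => hle c)
    (by rw [← (hS c0).1 hc0]; exact Finset.le_sup (mem_univ c0))
  ext c
  simp [winSet, hv, hS c]

lemma EU_le' (ui : Fin m → ℕ) (p : Fin m → ℚ) (K : ℚ) (hK : 0 ≤ K)
    (hnn : ∀ c, 0 ≤ p c) (hsum : ∑ c, p c ≤ 1)
    (hb : ∀ c, p c ≠ 0 → (ui c : ℚ) ≤ K) : EU ui p ≤ K := by
  calc EU ui p ≤ ∑ c, p c * K := by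
        apply Finset.sum_le_sum
        intro c _
        rcases eq_or_ne (p c) 0 with h | h
        · simp [h]
        · exact mul_le_mul_of_nonneg_left (hb c h) (hnn c)
    _ = (∑ c, p c) * K := by rw [← Finset.sum_mul]
    _ ≤ 1 * K := mul_le_mul_of_nonneg_right hsum hK
    _ = K := one_mul K

lemma EU_pair_gt (ε : ℚ) (p : Fin m → ℚ) (cj ck : Fin m) (hne : cj ≠ ck)
    (hsum : p cj + p ck = 1) (hq : ε < p ck) (hε0 : 0 < ε)
    (h0 : ∀ c, c ≠ cj → c ≠ ck → p c = 0)
    (ui : Fin m → ℕ) (hlt : ui cj < ui ck) :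
    (ui cj : ℚ) + ε < EU ui p := by
  have hEU : EU ui p = p cj * ui cj + p ck * ui ck := by
    unfold EU
    rw [← Finset.sum_subset (Finset.subset_univ ({cj, ck} : Finset (Fin m)))]
    · rw [Finset.sum_pair hne]
    · intro c _ hc
      simp only [mem_insert, mem_singleton, not_or] at hc
      rw [h0 c hc.1 hc.2, zero_mul]
  have h1 : (ui cj : ℚ) + 1 ≤ ui ck := by exact_mod_cast hlt
  have hq0 : 0 ≤ p ck := le_of_lt (lt_trans hε0 hq)
  have key : 0 ≤ p ck * ((ui ck : ℚ) - ui cj - 1) := mul_nonneg hq0 (by linarith)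
  rw [hEU]
  nlinarith [key, hq, hsum]

end Aux
section Prob

variable {n m : ℕ}

lemma pRC_nonneg (b : Ballot n m) (c : Fin m) : 0 ≤ pRC b c := by
  unfold pRC
  split <;> positivity

lemma pRV_nonneg (u : Fin n → Fin m → ℕ) (b : Ballot n m) (c : Fin m) :
    0 ≤ pRV u b c := by
  unfold pRV
  positivity

lemma pRC_sum (b : Ballot n m) : ∑ c, pRC b c ≤ 1 := by
  unfold pRC
  rw [Finset.sum_ite_mem, Finset.univ_inter, Finset.sum_const, nsmul_eq_mul]
  rcases eq_or_ne (winSet b).card 0 with h | h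
  · simp [h]
  · rw [mul_inv_cancel₀ (Nat.cast_ne_zero.mpr h)]

lemma pRV_sum (hn : 0 < n) (u : Fin n → Fin m → ℕ)
    (hu : ∀ i, Function.Injective (u i)) (b : Ballot n m) :
    ∑ c, pRV u b c ≤ 1 := by
  unfold pRV
  rw [← Finset.sum_div, div_le_one (by exact_mod_cast hn)]
  have key : ∑ c : Fin m, ((univ.filter fun i : Fin n =>
      c ∈ winSet b ∧ ∀ c' ∈ winSet b, u i c' ≤ u i c).card) ≤ n := by
    have hdisj : ∀ c1 ∈ (univ : Finset (Fin m)), ∀ c2 ∈ (univ : Finset (Fin m)), c1 ≠ c2 →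
        Disjoint (univ.filter fun i : Fin n => c1 ∈ winSet b ∧ ∀ c' ∈ winSet b, u i c' ≤ u i c1)
          (univ.filter fun i : Fin n => c2 ∈ winSet b ∧ ∀ c' ∈ winSet b, u i c' ≤ u i c2) := by
      intro c1 _ c2 _ hne
      rw [Finset.disjoint_left]
      intro j hj1 hj2
      simp only [mem_filter] at hj1 hj2
      exact hne (hu j (le_antisymm (hj2.2.2 c1 hj1.2.1) (hj1.2.2 c2 hj2.2.1)))
    calc ∑ c : Fin m, ((univ.filter fun i : Fin n =>
          c ∈ winSet b ∧ ∀ c' ∈ winSet b, u i c' ≤ u i c).card)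
        = (univ.biUnion fun c : Fin m => (univ.filter fun i : Fin n =>
            c ∈ winSet b ∧ ∀ c' ∈ winSet b, u i c' ≤ u i c)).card :=
          (Finset.card_biUnion hdisj).symm
      _ ≤ (univ : Finset (Fin n)).card := card_le_card (subset_univ _)
      _ = n := by simp
  exact_mod_cast key

lemma pRC_supp (b : Ballot n m) (c : Fin m) (h : c ∉ winSet b) : pRC b c = 0 := by
  unfold pRC
  rw [if_neg h]

lemma pRV_supp (u : Fin n → Fin m → ℕ) (b : Ballot n m) (c : Fin m)
    (h : c ∉ winSet b) : pRV u b c = 0 := by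
  unfold pRV
  rw [filter_false_of_mem (fun j _ hj => h hj.1)]
  simp

lemma EU_pRC_single (b : Ballot n m) (c0 : Fin m) (h : winSet b = {c0})
    (ui : Fin m → ℕ) : EU ui (pRC b) = ui c0 := by
  unfold EU pRC
  rw [h]
  simp

lemma EU_pRV_single (hn : 0 < n) (u : Fin n → Fin m → ℕ) (b : Ballot n m)
    (c0 : Fin m) (h : winSet b = {c0}) (i : Fin n) :
    EU (u i) (pRV u b) = u i c0 := by
  have hp : ∀ c, pRV u b c = if c = c0 then 1 else 0 := by
    intro c
    unfold pRV
    rw [h]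
    by_cases hc : c = c0
    · subst hc
      rw [if_pos rfl, filter_true_of_mem (fun j _ => by simp)]
      rw [card_univ]
      simp only [Fintype.card_fin]
      rw [div_self (by exact_mod_cast hn.ne')]
    · rw [if_neg hc, filter_false_of_mem (fun j _ hj => hc (mem_singleton.mp hj.1))]
      simp
  unfold EU
  simp [hp]

lemma pRC_pair (b : Ballot n m) (cj ck : Fin m) (hW : winSet b = {cj, ck})
    (hne : cj ≠ ck) : pRC b cj = 2⁻¹ ∧ pRC b ck = 2⁻¹ := by
  have hcard : ({cj, ck} : Finset (Fin m)).card = 2 := by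
    rw [card_insert_of_notMem (by simp [hne]), card_singleton]
  unfold pRC
  rw [hW, hcard]
  constructor
  · rw [if_pos (mem_insert_self _ _)]; norm_num
  · rw [if_pos (by simp)]; norm_num

lemma pRV_pair_sum (hn : 0 < n) (u : Fin n → Fin m → ℕ)
    (hu : ∀ i, Function.Injective (u i)) (b : Ballot n m) (cj ck : Fin m)
    (hW : winSet b = {cj, ck}) (hne : cj ≠ ck) :
    pRV u b cj + pRV u b ck = 1 := by
  unfold pRV
  rw [hW, ← add_div]
  have h1 : (univ.filter fun j : Fin n => cj ∈ ({cj, ck} : Finset (Fin m)) ∧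
        ∀ c' ∈ ({cj, ck} : Finset (Fin m)), u j c' ≤ u j cj)
      = univ.filter fun j : Fin n => u j ck ≤ u j cj := by
    apply filter_congr
    intro j _
    simp
  have h2 : (univ.filter fun j : Fin n => ck ∈ ({cj, ck} : Finset (Fin m)) ∧
        ∀ c' ∈ ({cj, ck} : Finset (Fin m)), u j c' ≤ u j ck)
      = univ.filter fun j : Fin n => ¬ u j ck ≤ u j cj := by
    apply filter_congr
    intro j _
    simp only [mem_insert, mem_singleton, not_le]
    constructor
    · rintro ⟨-, hall⟩
      have hjk := hall cj (Or.inl rfl)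
      rcases lt_or_eq_of_le hjk with hlt | heq
      · exact hlt
      · exact absurd (hu j heq) hne
    · intro hlt
      refine ⟨by simp, ?_⟩
      rintro c' (rfl | rfl)
      · exact le_of_lt hlt
      · exact le_refl _
  rw [h1, h2]
  have := Finset.card_filter_add_card_filter_not
    (s := (univ : Finset (Fin n))) (p := fun j => u j ck ≤ u j cj)
  rw [div_eq_one_iff_eq (by exact_mod_cast hn.ne' : (n:ℚ) ≠ 0)]
  rw_mod_cast [this]
  simp

lemma pRV_pair_ge (u : Fin n → Fin m → ℕ) (b : Ballot n m) (cj ck : Fin m)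
    (hW : winSet b = {cj, ck}) (i : Fin n) (hle : u i cj ≤ u i ck) :
    (n : ℚ)⁻¹ ≤ pRV u b ck := by
  unfold pRV
  rw [hW]
  have hmem : i ∈ univ.filter fun j : Fin n => ck ∈ ({cj, ck} : Finset (Fin m)) ∧
      ∀ c' ∈ ({cj, ck} : Finset (Fin m)), u j c' ≤ u j ck := by
    simp only [mem_filter, mem_univ, true_and, mem_insert, mem_singleton]
    exact ⟨by simp, by rintro c' (rfl | rfl) <;> [exact hle; exact le_refl _]⟩
  have hc : (1 : ℚ) ≤ ((univ.filter fun j : Fin n => ck ∈ ({cj, ck} : Finset (Fin m)) ∧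
      ∀ c' ∈ ({cj, ck} : Finset (Fin m)), u j c' ≤ u j ck).card : ℚ) := by
    exact_mod_cast Finset.card_pos.mpr ⟨i, hmem⟩
  rw [inv_eq_one_div]
  gcongr

end Prob
section Dev

variable {n m : ℕ}

lemma winSet_dev_pair (a : Fin n → Fin m) (i : Fin n) (cj ck : Fin m) (M : ℕ)
    (hcjM : sc (tv a) cj = M) (hltM : ∀ c, c ≠ cj → sc (tv a) c < M)
    (hai : a i ≠ cj) (hckH : sc (tv a) ck + 1 = M) (hckcj : ck ≠ cj)
    (hckai : ck ≠ a i) :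
    winSet (tv (Function.update a i ck)) = {cj, ck} := by
  have hsrc := sc_upd_src a i ck hckai
  have htgt := sc_upd_tgt a i ck (Ne.symm hckai)
  have hcj' : sc (tv (Function.update a i ck)) cj = M := by
    rw [sc_upd_other a i ck cj hai hckcj, hcjM]
  have hother : ∀ c, c ≠ cj → c ≠ ck → sc (tv (Function.update a i ck)) c < M := by
    intro c h1 h2
    by_cases h3 : c = a i
    · subst h3
      have := hltM (a i) hai
      omega
    · rw [sc_upd_other a i ck c (fun h => h3 h.symm) (Ne.symm h2)]
      exact hltM c h1
  apply winSet_eq _ _ M _ _ ⟨cj, mem_insert_self _ _⟩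
  · intro c
    constructor
    · intro hc
      rcases mem_insert.mp hc with h | h
      · subst h; exact hcj'
      · rw [mem_singleton] at h; subst h; omega
    · intro hc
      by_cases h1 : c = cj
      · subst h1; exact mem_insert_self _ _
      · by_cases h2 : c = ck
        · subst h2; simp
        · exact absurd hc (Nat.ne_of_lt (hother c h1 h2))
  · intro c
    by_cases h1 : c = cj
    · subst h1; omega
    · by_cases h2 : c = ck
      · subst h2; omega
      · exact le_of_lt (hother c h1 h2)

lemma winSet_dev_cj (a : Fin n → Fin m) (i : Fin n) (cj : Fin m) (M : ℕ)
    (hcjM : sc (tv a) cj = M) (hltM : ∀ c, c ≠ cj → sc (tv a) c < M)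
    (hai : a i ≠ cj) :
    winSet (tv (Function.update a i cj)) = {cj} := by
  have htgt := sc_upd_tgt a i cj hai
  have hother : ∀ c, c ≠ cj → sc (tv (Function.update a i cj)) c ≤ M := by
    intro c h1
    by_cases h3 : c = a i
    · subst h3
      have := sc_upd_src a i cj (Ne.symm hai)
      have := hltM (a i) hai
      omega
    · rw [sc_upd_other a i cj c (fun h => h3 h.symm) (fun h => h1 h.symm)]
      exact le_of_lt (hltM c h1)
  apply winSet_eq _ _ (M + 1) _ _ ⟨cj, mem_singleton_self _⟩
  · intro c
    constructor
    · intro hc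
      rw [mem_singleton] at hc; subst hc; omega
    · intro hc
      rw [mem_singleton]
      by_contra h1
      have := hother c h1
      omega
  · intro c
    by_cases h1 : c = cj
    · subst h1; omega
    · have := hother c h1; omega

lemma winSet_dev_nonH (a : Fin n → Fin m) (i : Fin n) (cj b' : Fin m) (M : ℕ)
    (hcjM : sc (tv a) cj = M) (hltM : ∀ c, c ≠ cj → sc (tv a) c < M)
    (hai : a i ≠ cj) (hb'cj : b' ≠ cj) (hb'ai : b' ≠ a i)
    (hb'H : sc (tv a) b' + 1 ≠ M) :
    winSet (tv (Function.update a i b')) = {cj} := by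
  have hcj' : sc (tv (Function.update a i b')) cj = M := by
    rw [sc_upd_other a i b' cj hai hb'cj, hcjM]
  have hother : ∀ c, c ≠ cj → sc (tv (Function.update a i b')) c < M := by
    intro c h1
    by_cases h2 : c = b'
    · subst h2
      have := sc_upd_tgt a i c (Ne.symm hb'ai)
      have := hltM c h1
      omega
    · by_cases h3 : c = a i
      · subst h3
        have := sc_upd_src a i b' hb'ai
        have := hltM (a i) hai
        omega
      · rw [sc_upd_other a i b' c (fun h => h3 h.symm) (fun h => h2 h.symm)]
        exact hltM c h1
  apply winSet_eq _ _ M _ _ ⟨cj, mem_singleton_self _⟩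
  · intro c
    constructor
    · intro hc
      rw [mem_singleton] at hc; subst hc; exact hcj'
    · intro hc
      rw [mem_singleton]
      by_contra h1
      exact absurd hc (Nat.ne_of_lt (hother c h1))
  · intro c
    by_cases h1 : c = cj
    · subst h1; omega
    · exact le_of_lt (hother c h1)

end Dev
theorem stmt11 {n m : ℕ} (hn : 0 < n) (hm : 0 < m)
    (u : Fin n → Fin m → ℕ) (hu : ∀ i, Function.Injective (u i))
    (ε : ℚ) (hε0 : 0 < ε) (hε : ε < min ((m : ℚ)⁻¹) ((n : ℚ)⁻¹))
    (a : Fin n → Fin m) (ha : ∀ i c, u i c ≤ u i (a i))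
    (p : Ballot n m → Fin m → ℚ) (hp : p = pRC ∨ p = pRV u)
    (cj : Fin m) (hW : winSet (tv a) = {cj}) :
    tbPNE p u a ε a ↔
      ∀ i : Fin n, ∀ ck ∈ Hset (tv a), ck ≠ a i → u i ck < u i cj := by
  have hεm : ε < (m : ℚ)⁻¹ := lt_of_lt_of_le hε (min_le_left _ _)
  have hεn : ε < (n : ℚ)⁻¹ := lt_of_lt_of_le hε (min_le_right _ _)
  -- properties of the tie-breaking lottery
  obtain ⟨hpnn, hpsum, hsupp, hsingle, hpair⟩ :
      (∀ b c, 0 ≤ p b c) ∧ (∀ b, ∑ c, p b c ≤ 1) ∧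
      (∀ b c, c ∉ winSet b → p b c = 0) ∧
      (∀ (i : Fin n) b c0, winSet b = {c0} → EU (u i) (p b) = u i c0) ∧
      (∀ (i : Fin n) b c1 c2, winSet b = {c1, c2} → c1 ≠ c2 → u i c1 ≤ u i c2 →
        p b c1 + p b c2 = 1 ∧ ε < p b c2) := by
    rcases hp with rfl | rfl
    · refine ⟨pRC_nonneg, pRC_sum, pRC_supp, fun i b c0 h => EU_pRC_single b c0 h (u i), ?_⟩
      intro i b c1 c2 hWb hne _
      obtain ⟨h1, h2⟩ := pRC_pair b c1 c2 hWb hne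
      have hm2 : (2 : ℚ) ≤ (m : ℚ) := by
        have : 2 ≤ m := by
          have h3 : Nontrivial (Fin m) := ⟨⟨c1, c2, hne⟩⟩
          have := Fintype.one_lt_card (α := Fin m)
          exact (by simpa using this : 1 < m)
        exact_mod_cast this
      have : (m : ℚ)⁻¹ ≤ 2⁻¹ := by
        apply inv_anti₀ (by norm_num) hm2
      rw [h1, h2]
      constructor
      · norm_num
      · linarith
    · refine ⟨pRV_nonneg u, pRV_sum hn u hu, pRV_supp u,
        fun i b c0 h => EU_pRV_single hn u b c0 h i, ?_⟩
      intro i b c1 c2 hWb hne hle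
      refine ⟨pRV_pair_sum hn u hu b c1 c2 hWb hne, ?_⟩
      exact lt_of_lt_of_le hεn (pRV_pair_ge u b c1 c2 hWb i hle)
  -- basic facts about the truthful profile
  set M := maxScore (tv a) with hM
  have hcjM : sc (tv a) cj = M := by
    have h : cj ∈ winSet (tv a) := by rw [hW]; exact mem_singleton_self cj
    simpa [winSet] using h
  have hltM : ∀ c, c ≠ cj → sc (tv a) c < M := by
    intro c hc
    have h1 : sc (tv a) c ≤ M := Finset.le_sup (mem_univ c)
    have h2 : sc (tv a) c ≠ M := by
      intro h
      have : c ∈ winSet (tv a) := by simp [winSet, h, hM]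
      rw [hW, mem_singleton] at this
      exact hc this
    exact lt_of_le_of_ne h1 h2
  have hHmem : ∀ c, c ∈ Hset (tv a) ↔ sc (tv a) c + 1 = M := by
    intro c; simp [Hset, hM]
  have hcjH : cj ∉ Hset (tv a) := by
    rw [hHmem, hcjM]; omega
  have hEUtop : ∀ (i : Fin n) b, EU (u i) (p b) ≤ u i (a i) := by
    intro i b
    apply EU_le' (u i) (p b) _ (by positivity) (hpnn b) (hpsum b)
    intro c _
    exact_mod_cast ha i c
  have hEUold : ∀ i : Fin n, EU (u i) (p (tv a)) = u i cj :=
    fun i => hsingle i _ cj hW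
  have hold : ∀ i : Fin n, tbU p u a ε i a = (u i cj : ℚ) + ε := by
    intro i
    unfold tbU
    rw [hEUold i, if_pos rfl]
  have hnew : ∀ (i : Fin n) (b' : Fin m), b' ≠ a i →
      tbU p u a ε i (Function.update a i b') = EU (u i) (p (tv (Function.update a i b'))) := by
    intro i b' hb'
    unfold tbU
    rw [Function.update_self, if_neg hb', add_zero]
  constructor
  · -- PNE → condition
    intro hPNE i ck hck hcka
    have hckcj : ck ≠ cj := fun h => hcjH (h ▸ hck)
    by_cases hai : a i = cj
    · -- cj is i's favourite
      have h1 : u i ck ≤ u i cj := hai ▸ ha i ck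
      rcases lt_or_eq_of_le h1 with h | h
      · exact h
      · exact absurd (hu i (h.trans (by rw [hai]))) hcka
    · -- a i ≠ cj : if u i cj < u i ck, deviating to ck is profitable
      by_contra hcon
      push_neg at hcon
      have hlt2 : u i cj < u i ck :=
        lt_of_le_of_ne hcon (fun h => hckcj (hu i h.symm))
      have hWdev : winSet (tv (Function.update a i ck)) = {cj, ck} :=
        winSet_dev_pair a i cj ck M hcjM hltM hai ((hHmem ck).mp hck) hckcj hcka
      obtain ⟨hs1, hs2⟩ := hpair i (tv (Function.update a i ck)) cj ck hWdev
        (Ne.symm hckcj) (le_of_lt hlt2)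
      have hgt : (u i cj : ℚ) + ε < EU (u i) (p (tv (Function.update a i ck))) := by
        apply EU_pair_gt ε _ cj ck (Ne.symm hckcj) hs1 hs2 hε0 _ (u i) hlt2
        intro c h1 h2
        apply hsupp
        rw [hWdev]
        simp [h1, h2]
      have hle3 := hPNE i ck
      rw [hnew i ck hcka, hold i] at hle3
      linarith
  · -- condition → PNE
    intro hcond i b'
    by_cases hb' : b' = a i
    · rw [hb', Function.update_eq_self]
    · rw [hnew i b' hb', hold i]
      by_cases hai : a i = cj
      · have h1 := hEUtop i (tv (Function.update a i b'))
        rw [hai] at h1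
        linarith
      · by_cases hbcj : b' = cj
        · subst hbcj
          have hWd := winSet_dev_cj a i b' M hcjM hltM hai
          rw [hsingle i _ _ hWd]
          linarith
        · by_cases hbH : b' ∈ Hset (tv a)
          · have hWd : winSet (tv (Function.update a i b')) = {cj, b'} :=
              winSet_dev_pair a i cj b' M hcjM hltM hai ((hHmem b').mp hbH) hbcj hb'
            have hlt3 : u i b' < u i cj := hcond i b' hbH hb'
            have h1 : EU (u i) (p (tv (Function.update a i b'))) ≤ (u i cj : ℚ) := by
              apply EU_le' (u i) _ _ (by positivity) (hpnn _) (hpsum _)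
              intro c hc
              have hcW : c ∈ winSet (tv (Function.update a i b')) := by
                by_contra hcw
                exact hc (hsupp _ c hcw)
              rw [hWd] at hcW
              rcases mem_insert.mp hcW with h | h
              · subst h; exact le_refl _
              · rw [mem_singleton] at h; subst h; exact_mod_cast le_of_lt hlt3
            linarith
          · have hWd : winSet (tv (Function.update a i b')) = {cj} :=
              winSet_dev_nonH a i cj b' M hcjM hltM hai hbcj hb'
                (fun h => hbH ((hHmem b').mpr h))
            rw [hsingle i _ _ hWd]
            linarith
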